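/- arXiv:2109.01007 — 5 statements merged into one kernel-verified Lean document; each statement's English description precedes it below -/
import Mathlib

section
/- For all α, β > 0 and s₁, s₂ ≥ 0, the vector χ = (1/(2(α+β))) · ( (s₂α−s₁β)/(2α), (s₁β−s₂α)/(2α), −(s₂α+s₁β)/(2β), (s₂α+s₁β)/(2β) ) is the unique vector in ℝ⁴ whose components sum to zero and which satisfies Q(α,β) χ = Λ 𝓔(α,β); moreover the resulting diffusion coefficient D := −(s₁χ₁ − s₁χ₂ + s₂χ₃ − s₂χ₄) equals (s₂²α² + s₁²β²)/(2(α+β)αβ), which is positive whenever (s₁,s₂) ≠ (0,0). -/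
/-! The cell problem `Q χ = Λ𝓔` is solved by the explicit `χ` by direct computation. It is
the only zero-sum solution because the kernel of `Q(α,β)` is the line spanned by the
equilibrium `(β, β, α, α)`, whose components do not sum to zero. The diffusion coefficient is
then a rational function of the parameters whose numerator `(s₂α)² + (s₁β)²` vanishes only
at `s₁ = s₂ = 0`. -/

noncomputable section

namespace NCS1

open Matrix

variable {α β : ℝ}

def Q (α β : ℝ) : Matrix (Fin 4) (Fin 4) ℝ :=
  !![-α, 0, 0, β;
     0, -α, β, 0;
     α, 0, -β, 0;
     0, α, 0, -β]

def equilibrium (α β : ℝ) : Fin 4 → ℝ := (2 * (α + β))⁻¹ • ![β, β, α, α]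

def speedTimesEquilibrium (α β s₁ s₂ : ℝ) : Fin 4 → ℝ :=
  ![s₁ * equilibrium α β 0, -(s₁ * equilibrium α β 1),
    s₂ * equilibrium α β 2, -(s₂ * equilibrium α β 3)]

def chi (α β s₁ s₂ : ℝ) : Fin 4 → ℝ := (2 * (α + β))⁻¹ •
  ![(s₂ * α - s₁ * β) / (2 * α),
    (s₁ * β - s₂ * α) / (2 * α),
    -((s₂ * α + s₁ * β) / (2 * β)),
    (s₂ * α + s₁ * β) / (2 * β)]

theorem Q_mulVec_apply (d : Fin 4 → ℝ) :
    Q α β *ᵥ d = ![-α * d 0 + β * d 3, -α * d 1 + β * d 2,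
      α * d 0 - β * d 2, α * d 1 - β * d 3] := by
  ext i
  fin_cases i <;> simp [Q, mulVec, dotProduct, Fin.sum_univ_four] <;> ring

theorem eq_zero_of_Q_mulVec_eq_zero (hα : α ≠ 0) (hβ : β ≠ 0) (hαβ : α + β ≠ 0)
    {d : Fin 4 → ℝ} (hd : Q α β *ᵥ d = 0) (hsum : ∑ i, d i = 0) : d = 0 := by
  rw [Q_mulVec_apply] at hd
  have h0 : -α * d 0 + β * d 3 = 0 := congrFun hd 0
  have h2 : α * d 0 - β * d 2 = 0 := congrFun hd 2
  have h3 : α * d 1 - β * d 3 = 0 := congrFun hd 3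
  rw [Fin.sum_univ_four] at hsum
  have e1 : d 1 = d 0 := mul_left_cancel₀ hα (by linear_combination h3 + h0)
  have e3 : d 3 = d 2 := mul_left_cancel₀ hβ (by linear_combination h0 + h2)
  have e0 : d 0 = 0 := by
    refine (mul_eq_zero.1 ?_).resolve_left hαβ
    linear_combination h2 + (β / 2) * (hsum - e1 - e3)
  have e2 : d 2 = 0 := by linear_combination hsum / 2 - e1 / 2 - e3 / 2 - e0
  ext i
  fin_cases i <;> simp [e0, e1, e2, e3]

theorem chi_sum (α β s₁ s₂ : ℝ) :
    chi α β s₁ s₂ 0 + chi α β s₁ s₂ 1 + chi α β s₁ s₂ 2 + chi α β s₁ s₂ 3 = 0 := by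
  simp only [chi, Pi.smul_apply, smul_eq_mul, Matrix.cons_val]
  ring

theorem Q_mulVec_chi (hα : α ≠ 0) (hβ : β ≠ 0) (s₁ s₂ : ℝ) :
    Q α β *ᵥ chi α β s₁ s₂ = speedTimesEquilibrium α β s₁ s₂ := by
  rw [Q_mulVec_apply]
  ext i
  fin_cases i <;> simp [chi, speedTimesEquilibrium, equilibrium] <;> field_simp <;> ring

theorem eq_chi_of_Q_mulVec_eq (hα : α ≠ 0) (hβ : β ≠ 0) (hαβ : α + β ≠ 0) {s₁ s₂ : ℝ}
    {y : Fin 4 → ℝ} (hsum : y 0 + y 1 + y 2 + y 3 = 0)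
    (hy : Q α β *ᵥ y = speedTimesEquilibrium α β s₁ s₂) : y = chi α β s₁ s₂ := by
  refine sub_eq_zero.1 (eq_zero_of_Q_mulVec_eq_zero hα hβ hαβ ?_ ?_)
  · rw [mulVec_sub, hy, Q_mulVec_chi hα hβ, sub_self]
  · simp only [Fin.sum_univ_four, Pi.sub_apply]
    linear_combination hsum - chi_sum α β s₁ s₂

theorem diffusion_chi (hα : α ≠ 0) (hβ : β ≠ 0) (s₁ s₂ : ℝ) :
    -(s₁ * chi α β s₁ s₂ 0 - s₁ * chi α β s₁ s₂ 1 + s₂ * chi α β s₁ s₂ 2 - s₂ * chi α β s₁ s₂ 3)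
      = (s₂ ^ 2 * α ^ 2 + s₁ ^ 2 * β ^ 2) / (2 * (α + β) * α * β) := by
  simp only [chi, Pi.smul_apply, smul_eq_mul, Matrix.cons_val]
  field_simp
  ring

theorem sq_mul_add_sq_mul_pos (hα : α ≠ 0) (hβ : β ≠ 0) {s₁ s₂ : ℝ} (hs : (s₁, s₂) ≠ (0, 0)) :
    0 < s₂ ^ 2 * α ^ 2 + s₁ ^ 2 * β ^ 2 := by
  rcases eq_or_ne s₁ 0 with rfl | hs₁
  · have hs₂ : s₂ ≠ 0 := by simpa using hs
    positivity
  · positivity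

end NCS1

end

theorem ncs1_chi_and_diffusion_general (α β s₁ s₂ : ℝ) (hα : 0 < α) (hβ : 0 < β) :
    let Q : Matrix (Fin 4) (Fin 4) ℝ :=
      !![-α, 0, 0, β;
         0, -α, β, 0;
         α, 0, -β, 0;
         0, α, 0, -β]
    let 𝓔 : Fin 4 → ℝ := (2 * (α + β))⁻¹ • ![β, β, α, α]
    let Λ𝓔 : Fin 4 → ℝ := ![s₁ * 𝓔 0, -(s₁ * 𝓔 1), s₂ * 𝓔 2, -(s₂ * 𝓔 3)]
    let χ : Fin 4 → ℝ := (2 * (α + β))⁻¹ •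
      ![(s₂ * α - s₁ * β) / (2 * α),
        (s₁ * β - s₂ * α) / (2 * α),
        -((s₂ * α + s₁ * β) / (2 * β)),
        (s₂ * α + s₁ * β) / (2 * β)]
    (χ 0 + χ 1 + χ 2 + χ 3 = 0) ∧
    Q.mulVec χ = Λ𝓔 ∧
    (∀ y : Fin 4 → ℝ, y 0 + y 1 + y 2 + y 3 = 0 → Q.mulVec y = Λ𝓔 → y = χ) ∧
    -(s₁ * χ 0 - s₁ * χ 1 + s₂ * χ 2 - s₂ * χ 3)
      = (s₂ ^ 2 * α ^ 2 + s₁ ^ 2 * β ^ 2) / (2 * (α + β) * α * β) ∧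
    ((s₁, s₂) ≠ (0, 0) →
      0 < (s₂ ^ 2 * α ^ 2 + s₁ ^ 2 * β ^ 2) / (2 * (α + β) * α * β)) := by
  intro Q 𝓔 Λ𝓔 χ
  refine ⟨NCS1.chi_sum α β s₁ s₂, NCS1.Q_mulVec_chi hα.ne' hβ.ne' s₁ s₂,
    fun y hsum hy ↦ NCS1.eq_chi_of_Q_mulVec_eq hα.ne' hβ.ne' (add_pos hα hβ).ne' hsum hy,
    NCS1.diffusion_chi hα.ne' hβ.ne' s₁ s₂, fun hs ↦ ?_⟩
  have := NCS1.sq_mul_add_sq_mul_pos hα.ne' hβ.ne' hs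
  positivity

/-- For all `α, β > 0` and `s₁, s₂ ≥ 0`, the explicit vector `χ` is the
unique vector in `ℝ⁴` whose components sum to zero and which satisfies
`Q(α,β) χ = Λ 𝓔(α,β)` (with `Λ = diag(s₁,−s₁,s₂,−s₂)`); the resulting diffusion
coefficient `D = −(s₁χ₁ − s₁χ₂ + s₂χ₃ − s₂χ₄)` equals
`(s₂²α² + s₁²β²)/(2(α+β)αβ)`, which is positive whenever `(s₁,s₂) ≠ (0,0)`. -/
theorem ncs1_chi_and_diffusion (α β s₁ s₂ : ℝ) (hα : 0 < α) (hβ : 0 < β)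
    (hs₁ : 0 ≤ s₁) (hs₂ : 0 ≤ s₂) :
    let Q : Matrix (Fin 4) (Fin 4) ℝ :=
      !![-α, 0, 0, β;
         0, -α, β, 0;
         α, 0, -β, 0;
         0, α, 0, -β]
    let 𝓔 : Fin 4 → ℝ := (2 * (α + β))⁻¹ • ![β, β, α, α]
    let Λ𝓔 : Fin 4 → ℝ := ![s₁ * 𝓔 0, -(s₁ * 𝓔 1), s₂ * 𝓔 2, -(s₂ * 𝓔 3)]
    let χ : Fin 4 → ℝ := (2 * (α + β))⁻¹ •
      ![(s₂ * α - s₁ * β) / (2 * α),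
        (s₁ * β - s₂ * α) / (2 * α),
        -((s₂ * α + s₁ * β) / (2 * β)),
        (s₂ * α + s₁ * β) / (2 * β)]
    (χ 0 + χ 1 + χ 2 + χ 3 = 0) ∧
    Q.mulVec χ = Λ𝓔 ∧
    (∀ y : Fin 4 → ℝ, y 0 + y 1 + y 2 + y 3 = 0 → Q.mulVec y = Λ𝓔 → y = χ) ∧
    -(s₁ * χ 0 - s₁ * χ 1 + s₂ * χ 2 - s₂ * χ 3)
      = (s₂ ^ 2 * α ^ 2 + s₁ ^ 2 * β ^ 2) / (2 * (α + β) * α * β) ∧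
    ((s₁, s₂) ≠ (0, 0) →
      0 < (s₂ ^ 2 * α ^ 2 + s₁ ^ 2 * β ^ 2) / (2 * (α + β) * α * β)) :=
  ncs1_chi_and_diffusion_general α β s₁ s₂ hα hβ
end

section
/- Let α, β : ℝ → (0,∞) be differentiable and s₁, s₂ ≥ 0. For each x, the vector λ(x) = (1/(4(α+β))) · ( (s₂α'−s₁β')/α, −(s₂α'−s₁β')/α, −(s₂α'+s₁β')/β, (s₂α'+s₁β')/β ) − ((α'+β')/(4(α+β)²)) · ( (s₂α−s₁β)/α, −(s₂α−s₁β)/α, −(s₂α+s₁β)/β, (s₂α+s₁β)/β ) (all functions evaluated at x, with α' = dα/dx, β' = dβ/dx) is the unique vector in ℝ⁴ whose components sum to zero and which satisfies Q(α(x),β(x)) λ(x) = Λ (d/dx) 𝓔(α(x),β(x)); moreover the resulting drift U := s₁λ₁ − s₁λ₂ + s₂λ₃ − s₂λ₄ equals [ s₂(s₁β−s₂α)α' − s₁(s₂α+s₁β)β' ] / (2(α+β)αβ) + (s₂²α² + s₁²β²)(α'+β') / (2(α+β)²αβ). -/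
/-! The kernel of `Q(a, b)` is spanned by the equilibrium `(b, b, a, a)`, whose components sum
to `2 (a + b) ≠ 0`; hence `Q` is injective on zero-sum vectors, and `λ` is the only zero-sum
solution once it is a solution at all. That it is one, and the formula for the drift, are
rational identities in `α, β, α', β'` after the quotient rule computes `(d/dx) 𝓔`. -/

open Matrix

def ncsGenerator (a b : ℝ) : Matrix (Fin 4) (Fin 4) ℝ :=
  !![-a, 0, 0, b;
     0, -a, b, 0;
     a, 0, -b, 0;
     0, a, 0, -b]

noncomputable def ncsLambda (a b a' b' s₁ s₂ : ℝ) : Fin 4 → ℝ :=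
  (4 * (a + b))⁻¹ •
      ![(s₂ * a' - s₁ * b') / a, -((s₂ * a' - s₁ * b') / a),
        -((s₂ * a' + s₁ * b') / b), (s₂ * a' + s₁ * b') / b]
    - ((a' + b') / (4 * (a + b) ^ 2)) •
      ![(s₂ * a - s₁ * b) / a, -((s₂ * a - s₁ * b) / a),
        -((s₂ * a + s₁ * b) / b), (s₂ * a + s₁ * b) / b]

theorem ncsGenerator_mulVec (a b : ℝ) (v : Fin 4 → ℝ) :
    ncsGenerator a b *ᵥ v =
      ![-a * v 0 + b * v 3, -a * v 1 + b * v 2, a * v 0 - b * v 2, a * v 1 - b * v 3] := by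
  ext i
  fin_cases i <;>
    simp only [ncsGenerator, mulVec, dotProduct, Fin.sum_univ_four, of_apply, cons_val',
      cons_val_fin_one, cons_val_zero, cons_val_one, cons_val, Fin.isValue, Fin.reduceFinMk,
      Fin.zero_eta, Fin.mk_one] <;>
    ring

section

variable {a b : ℝ}

theorem eq_zero_of_ncsGenerator_mulVec_eq_zero (ha : a ≠ 0) (hb : b ≠ 0) (hab : a + b ≠ 0)
    {v : Fin 4 → ℝ} (hQ : ncsGenerator a b *ᵥ v = 0) (hsum : ∑ i, v i = 0) : v = 0 := by
  rw [ncsGenerator_mulVec] at hQ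
  have e0 : -a * v 0 + b * v 3 = 0 := congrFun hQ 0
  have e1 : -a * v 1 + b * v 2 = 0 := congrFun hQ 1
  have e2 : a * v 0 - b * v 2 = 0 := congrFun hQ 2
  rw [Fin.sum_univ_four] at hsum
  have h0 : v 0 = 0 := by
    refine (mul_eq_zero.mp ?_).resolve_left (mul_ne_zero (mul_ne_zero two_ne_zero ha) hab)
    linear_combination (-a) * e0 + b * e1 + (a + b) * e2 + a * b * hsum
  have h2 : v 2 = 0 := by simpa [h0, hb] using e2
  have h3 : v 3 = 0 := by simpa [h0, hb] using e0
  have h1 : v 1 = 0 := by simpa [h2, ha] using e1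
  ext i
  fin_cases i <;> assumption

theorem eq_of_ncsGenerator_mulVec_eq (ha : a ≠ 0) (hb : b ≠ 0) (hab : a + b ≠ 0)
    {v w : Fin 4 → ℝ} (hQ : ncsGenerator a b *ᵥ v = ncsGenerator a b *ᵥ w)
    (hsum : ∑ i, v i = ∑ i, w i) : v = w :=
  sub_eq_zero.mp <| eq_zero_of_ncsGenerator_mulVec_eq_zero ha hb hab
    (by rw [mulVec_sub, hQ, sub_self])
    (by simp only [Pi.sub_apply, Finset.sum_sub_distrib, hsum, sub_self])

variable (a' b' s₁ s₂ : ℝ)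

theorem sum_ncsLambda : ∑ i, ncsLambda a b a' b' s₁ s₂ i = 0 := by
  simp [ncsLambda, Fin.sum_univ_four]

theorem ncsGenerator_mulVec_ncsLambda (ha : a ≠ 0) (hb : b ≠ 0) (hab : a + b ≠ 0) :
    ncsGenerator a b *ᵥ ncsLambda a b a' b' s₁ s₂ =
      ![s₁ * ((b' * (a + b) - b * (a' + b')) / (2 * (a + b) ^ 2)),
        -(s₁ * ((b' * (a + b) - b * (a' + b')) / (2 * (a + b) ^ 2))),
        s₂ * ((a' * (a + b) - a * (a' + b')) / (2 * (a + b) ^ 2)),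
        -(s₂ * ((a' * (a + b) - a * (a' + b')) / (2 * (a + b) ^ 2)))] := by
  rw [ncsGenerator_mulVec]
  ext i
  fin_cases i <;>
    simp only [ncsLambda, Pi.sub_apply, smul_cons, smul_eq_mul, smul_empty, cons_val_zero,
      cons_val_one, cons_val, Fin.isValue, Fin.reduceFinMk, Fin.zero_eta, Fin.mk_one] <;>
    field_simp <;>
    ring

theorem ncsLambda_drift (ha : a ≠ 0) (hb : b ≠ 0) (hab : a + b ≠ 0) :
    let l := ncsLambda a b a' b' s₁ s₂
    s₁ * l 0 - s₁ * l 1 + s₂ * l 2 - s₂ * l 3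
      = (s₂ * (s₁ * b - s₂ * a) * a' - s₁ * (s₂ * a + s₁ * b) * b') / (2 * (a + b) * a * b)
        + (s₂ ^ 2 * a ^ 2 + s₁ ^ 2 * b ^ 2) / (2 * (a + b) ^ 2 * a * b) * (a' + b') := by
  simp only [ncsLambda, Pi.sub_apply, smul_cons, smul_eq_mul, smul_empty, cons_val_zero,
    cons_val_one, cons_val, Fin.isValue]
  field_simp
  ring

end

theorem deriv_div_two_mul_add {u α β : ℝ → ℝ} {x : ℝ} (hu : DifferentiableAt ℝ u x)
    (hα : DifferentiableAt ℝ α x) (hβ : DifferentiableAt ℝ β x) (h : α x + β x ≠ 0) :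
    deriv (fun y => u y / (2 * (α y + β y))) x
      = (deriv u x * (α x + β x) - u x * (deriv α x + deriv β x)) / (2 * (α x + β x) ^ 2) := by
  have hden : HasDerivAt (fun y => 2 * (α y + β y)) (2 * (deriv α x + deriv β x)) x :=
    (hα.hasDerivAt.add hβ.hasDerivAt).const_mul 2
  have hquot : HasDerivAt (fun y => u y / (2 * (α y + β y)))
      ((deriv u x * (2 * (α x + β x)) - u x * (2 * (deriv α x + deriv β x)))
        / (2 * (α x + β x)) ^ 2) x :=
    hu.hasDerivAt.div hden (mul_ne_zero two_ne_zero h)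
  rw [hquot.deriv]
  field_simp

theorem ncs1_lambda_and_drift_general (α β : ℝ → ℝ) (s₁ s₂ : ℝ)
    (hα : Differentiable ℝ α) (hβ : Differentiable ℝ β)
    (hαpos : ∀ x, 0 < α x) (hβpos : ∀ x, 0 < β x)
    (x : ℝ) :
    let Q : Matrix (Fin 4) (Fin 4) ℝ :=
      !![-(α x), 0, 0, β x;
         0, -(α x), β x, 0;
         α x, 0, -(β x), 0;
         0, α x, 0, -(β x)]
    -- Λ (d/dx) 𝓔(α(x),β(x)) with 𝓔 = (β,β,α,α)/(2(α+β)) and Λ = diag(s₁,−s₁,s₂,−s₂)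
    let T : Fin 4 → ℝ :=
      ![s₁ * deriv (fun y => β y / (2 * (α y + β y))) x,
        -(s₁ * deriv (fun y => β y / (2 * (α y + β y))) x),
        s₂ * deriv (fun y => α y / (2 * (α y + β y))) x,
        -(s₂ * deriv (fun y => α y / (2 * (α y + β y))) x)]
    let lam : Fin 4 → ℝ :=
      (4 * (α x + β x))⁻¹ •
        ![(s₂ * deriv α x - s₁ * deriv β x) / α x,
          -((s₂ * deriv α x - s₁ * deriv β x) / α x),
          -((s₂ * deriv α x + s₁ * deriv β x) / β x),
          (s₂ * deriv α x + s₁ * deriv β x) / β x]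
      - ((deriv α x + deriv β x) / (4 * (α x + β x) ^ 2)) •
        ![(s₂ * α x - s₁ * β x) / α x,
          -((s₂ * α x - s₁ * β x) / α x),
          -((s₂ * α x + s₁ * β x) / β x),
          (s₂ * α x + s₁ * β x) / β x]
    (lam 0 + lam 1 + lam 2 + lam 3 = 0) ∧
    Q.mulVec lam = T ∧
    (∀ y : Fin 4 → ℝ, y 0 + y 1 + y 2 + y 3 = 0 → Q.mulVec y = T → y = lam) ∧
    s₁ * lam 0 - s₁ * lam 1 + s₂ * lam 2 - s₂ * lam 3
      = (s₂ * (s₁ * β x - s₂ * α x) * deriv α x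
          - s₁ * (s₂ * α x + s₁ * β x) * deriv β x)
          / (2 * (α x + β x) * α x * β x)
        + (s₂ ^ 2 * (α x) ^ 2 + s₁ ^ 2 * (β x) ^ 2)
          / (2 * (α x + β x) ^ 2 * α x * β x) * (deriv α x + deriv β x) := by
  intro Q T lam
  have ha : α x ≠ 0 := (hαpos x).ne'
  have hb : β x ≠ 0 := (hβpos x).ne'
  have hab : α x + β x ≠ 0 := (add_pos (hαpos x) (hβpos x)).ne'
  have hsum : ∑ i, lam i = 0 := sum_ncsLambda ..
  have hQlam : Q *ᵥ lam = T := by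
    simp only [T, deriv_div_two_mul_add (hβ x) (hα x) (hβ x) hab,
      deriv_div_two_mul_add (hα x) (hα x) (hβ x) hab]
    exact ncsGenerator_mulVec_ncsLambda _ _ _ _ ha hb hab
  refine ⟨by rwa [Fin.sum_univ_four] at hsum, hQlam, fun y hy hQy => ?_,
    ncsLambda_drift _ _ _ _ ha hb hab⟩
  exact eq_of_ncsGenerator_mulVec_eq ha hb hab (hQy.trans hQlam.symm)
    (by rw [hsum, Fin.sum_univ_four, hy])

/-- For differentiable positive rates `α, β : ℝ → (0,∞)` and speeds
`s₁, s₂ ≥ 0`, the explicit vector `λ(x)` is the unique vector in `ℝ⁴` whose components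
sum to zero and which satisfies `Q(α(x),β(x)) λ(x) = Λ (d/dx) 𝓔(α(x),β(x))`; the
resulting drift `U = s₁λ₁ − s₁λ₂ + s₂λ₃ − s₂λ₄` equals
`[s₂(s₁β−s₂α)α' − s₁(s₂α+s₁β)β']/(2(α+β)αβ) + (s₂²α² + s₁²β²)(α'+β')/(2(α+β)²αβ)`. -/
theorem ncs1_lambda_and_drift (α β : ℝ → ℝ) (s₁ s₂ : ℝ)
    (hα : Differentiable ℝ α) (hβ : Differentiable ℝ β)
    (hαpos : ∀ x, 0 < α x) (hβpos : ∀ x, 0 < β x)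
    (hs₁ : 0 ≤ s₁) (hs₂ : 0 ≤ s₂) (x : ℝ) :
    let Q : Matrix (Fin 4) (Fin 4) ℝ :=
      !![-(α x), 0, 0, β x;
         0, -(α x), β x, 0;
         α x, 0, -(β x), 0;
         0, α x, 0, -(β x)]
    -- Λ (d/dx) 𝓔(α(x),β(x)) with 𝓔 = (β,β,α,α)/(2(α+β)) and Λ = diag(s₁,−s₁,s₂,−s₂)
    let T : Fin 4 → ℝ :=
      ![s₁ * deriv (fun y => β y / (2 * (α y + β y))) x,
        -(s₁ * deriv (fun y => β y / (2 * (α y + β y))) x),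
        s₂ * deriv (fun y => α y / (2 * (α y + β y))) x,
        -(s₂ * deriv (fun y => α y / (2 * (α y + β y))) x)]
    let lam : Fin 4 → ℝ :=
      (4 * (α x + β x))⁻¹ •
        ![(s₂ * deriv α x - s₁ * deriv β x) / α x,
          -((s₂ * deriv α x - s₁ * deriv β x) / α x),
          -((s₂ * deriv α x + s₁ * deriv β x) / β x),
          (s₂ * deriv α x + s₁ * deriv β x) / β x]
      - ((deriv α x + deriv β x) / (4 * (α x + β x) ^ 2)) •
        ![(s₂ * α x - s₁ * β x) / α x,
          -((s₂ * α x - s₁ * β x) / α x),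
          -((s₂ * α x + s₁ * β x) / β x),
          (s₂ * α x + s₁ * β x) / β x]
    (lam 0 + lam 1 + lam 2 + lam 3 = 0) ∧
    Q.mulVec lam = T ∧
    (∀ y : Fin 4 → ℝ, y 0 + y 1 + y 2 + y 3 = 0 → Q.mulVec y = T → y = lam) ∧
    s₁ * lam 0 - s₁ * lam 1 + s₂ * lam 2 - s₂ * lam 3
      = (s₂ * (s₁ * β x - s₂ * α x) * deriv α x
          - s₁ * (s₂ * α x + s₁ * β x) * deriv β x)
          / (2 * (α x + β x) * α x * β x)
        + (s₂ ^ 2 * (α x) ^ 2 + s₁ ^ 2 * (β x) ^ 2)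
          / (2 * (α x + β x) ^ 2 * α x * β x) * (deriv α x + deriv β x) :=
  ncs1_lambda_and_drift_general α β s₁ s₂ hα hβ hαpos hβpos x
end

section
/- For all α, β, γ > 0, the kernel of the 4×4 matrix Q(α,β,γ) equals the one-dimensional span of the equilibrium vector (β+γ, β+γ, α, α), i.e. Ker Q(α,β,γ) = Span{𝓔} with 𝓔 = (β+γ, β+γ, α, α)/(2(α+β+γ)), and the range of Q(α,β,γ) equals {R ∈ ℝ⁴ : R₁ + R₂ + R₃ + R₄ = 0}. -/
/-!
The columns of `Q` sum to zero (the dynamics conserves total mass), so the range of `Q` lies in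
the hyperplane `R₁ + R₂ + R₃ + R₄ = 0`. Solving `Q x = 0` directly shows that the kernel is the
line through `(β + γ, β + γ, α, α)`; by rank–nullity the range is then `3`-dimensional, hence
the whole hyperplane.
-/

open Matrix LinearMap Module

section ZeroColumnSums

variable {K ι : Type*} [Field K] [Fintype ι]

def coordSum : Dual K (ι → K) := ∑ i, proj i

theorem coordSum_apply (x : ι → K) : coordSum x = ∑ i, x i := by
  simp [coordSum]

theorem coordSum_ne_zero [Nonempty ι] : (coordSum : Dual K (ι → K)) ≠ 0 := by
  classical
  intro h
  have hsingle := congrArg (fun f : Dual K (ι → K) => f (Pi.single (Classical.arbitrary ι) 1)) h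
  simp [coordSum_apply] at hsingle

theorem range_mulVecLin_le_ker_coordSum {A : Matrix ι ι K} (hA : (1 : ι → K) ᵥ* A = 0) :
    range A.mulVecLin ≤ ker coordSum := by
  rintro _ ⟨x, rfl⟩
  rw [mem_ker, coordSum_apply, mulVecLin_apply, ← one_dotProduct, dotProduct_mulVec, hA,
    zero_dotProduct]

theorem range_mulVecLin_eq_ker_coordSum {A : Matrix ι ι K} (hA : (1 : ι → K) ᵥ* A = 0)
    (hker : finrank K (ker A.mulVecLin) = 1) : range A.mulVecLin = ker coordSum := by
  have : Nonempty ι := by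
    have := (ker A.mulVecLin).finrank_le
    rw [hker, finrank_pi] at this
    exact Fintype.card_pos_iff.mp this
  apply Submodule.eq_of_le_of_finrank_eq (range_mulVecLin_le_ker_coordSum hA)
  have hA_rank := finrank_range_add_finrank_ker A.mulVecLin
  have hsum_rank := Dual.finrank_ker_add_one_of_ne_zero (coordSum_ne_zero (K := K) (ι := ι))
  omega

end ZeroColumnSums

section NCS2

variable (α β γ : ℝ)

def ncs2Q : Matrix (Fin 4) (Fin 4) ℝ :=
  !![-α, 0, γ, β;
     0, -α, β, γ;
     α, 0, -(β + γ), 0;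
     0, α, 0, -(β + γ)]

theorem ncs2Q_mulVec (x : Fin 4 → ℝ) :
    ncs2Q α β γ *ᵥ x = ![-α * x 0 + γ * x 2 + β * x 3, -α * x 1 + β * x 2 + γ * x 3,
      α * x 0 - (β + γ) * x 2, α * x 1 - (β + γ) * x 3] := by
  ext i
  fin_cases i <;> simp [ncs2Q, mulVec, dotProduct, Fin.sum_univ_four] <;> ring

theorem one_vecMul_ncs2Q : (1 : Fin 4 → ℝ) ᵥ* ncs2Q α β γ = 0 := by
  ext j
  fin_cases j <;> simp [ncs2Q, vecMul, dotProduct, Fin.sum_univ_four]; ring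

variable {α β γ}

theorem ker_ncs2Q (hα : α ≠ 0) (hβ : β ≠ 0) :
    ker (ncs2Q α β γ).mulVecLin = ℝ ∙ ![β + γ, β + γ, α, α] := by
  ext x
  rw [mem_ker, mulVecLin_apply, ncs2Q_mulVec, Submodule.mem_span_singleton]
  constructor
  · intro h
    have h0 := congrFun h 0
    have h2 := congrFun h 2
    have h3 := congrFun h 3
    simp only [Fin.isValue, Matrix.cons_val, Pi.zero_apply] at h0 h2 h3
    have hx23 : x 2 = x 3 := mul_left_cancel₀ hβ (by linear_combination -h0 - h2)
    refine ⟨x 2 / α, ?_⟩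
    ext i
    fin_cases i <;> simp <;> field_simp
    · linear_combination -h2
    · linear_combination -h3 + (β + γ) * hx23
    · exact hx23
  · rintro ⟨c, rfl⟩
    ext i
    fin_cases i <;> simp <;> ring

end NCS2

/-- For all `α, β, γ > 0`, the kernel of the 4×4 matrix `Q(α,β,γ)` of
NCS design 2 equals the span of the equilibrium vector
`𝓔 = (β+γ, β+γ, α, α)/(2(α+β+γ))`, and its range equals the hyperplane
`{R ∈ ℝ⁴ : R₁ + R₂ + R₃ + R₄ = 0}`. -/
theorem ncs2_kernel_and_range (α β γ : ℝ) (hα : 0 < α) (hβ : 0 < β) (hγ : 0 < γ) :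
    LinearMap.ker (Matrix.mulVecLin
      (!![-α, 0, γ, β;
          0, -α, β, γ;
          α, 0, -(β + γ), 0;
          0, α, 0, -(β + γ)] : Matrix (Fin 4) (Fin 4) ℝ))
      = Submodule.span ℝ {(2 * (α + β + γ))⁻¹ • ![β + γ, β + γ, α, α]} ∧
    (LinearMap.range (Matrix.mulVecLin
      (!![-α, 0, γ, β;
          0, -α, β, γ;
          α, 0, -(β + γ), 0;
          0, α, 0, -(β + γ)] : Matrix (Fin 4) (Fin 4) ℝ)) : Set (Fin 4 → ℝ))
      = {R : Fin 4 → ℝ | R 0 + R 1 + R 2 + R 3 = 0} := by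
  have hker := ker_ncs2Q (γ := γ) hα.ne' hβ.ne'
  have hnorm : IsUnit (2 * (α + β + γ))⁻¹ := (inv_pos.mpr (by positivity)).ne'.isUnit
  have hE : ![β + γ, β + γ, α, α] ≠ 0 := fun h => hα.ne' (congrFun h 2)
  refine ⟨by rw [Submodule.span_singleton_smul_eq hnorm]; exact hker, ?_⟩
  change (range (ncs2Q α β γ).mulVecLin : Set (Fin 4 → ℝ)) = _
  rw [range_mulVecLin_eq_ker_coordSum (one_vecMul_ncs2Q α β γ)
    (by rw [hker, finrank_span_singleton hE])]
  ext R
  simp [coordSum_apply, Fin.sum_univ_four]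
end

section
/- For all α, β, γ > 0, the vector χ = (1/(2(α+β+γ))) (X, −X, Y, −Y), where X = (β−γ)/(2β) − (γ+β)²/(2αβ) and Y = −(α+β+γ)/(2β), is the unique vector in ℝ⁴ whose components sum to zero and which satisfies Q(α,β,γ) χ = Λ 𝓔; moreover the resulting diffusion coefficient D := −(χ₁ − χ₂ + χ₃ − χ₄) equals (α² + 2αγ + (γ+β)²)/(2αβ(α+β+γ)). -/
/-!
`Q` has a one-dimensional kernel spanned by the equilibrium (the sum of rows 1 and 3 forces
`y₃ = y₄`, and then rows 3 and 4 fix `y₁ = y₂` in terms of it), and that line meets the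
hyperplane of zero-sum vectors only in `0`. Hence `Q` is injective on zero-sum vectors, so it
suffices to check by direct computation that the given `χ` is a zero-sum solution of
`Q χ = Λ 𝓔`; the value of `D` is then a rational identity.
-/

open Matrix

namespace NCS2

variable {K : Type*} [Field K]

def Q (α β γ : K) : Matrix (Fin 4) (Fin 4) K :=
  !![-α, 0, γ, β;
     0, -α, β, γ;
     α, 0, -(β + γ), 0;
     0, α, 0, -(β + γ)]

def equilibrium (α β γ : K) : Fin 4 → K :=
  (2 * (α + β + γ))⁻¹ • ![β + γ, β + γ, α, α]

def chi (α β γ : K) : Fin 4 → K :=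
  let X := (β - γ) / (2 * β) - (γ + β) ^ 2 / (2 * α * β)
  let Y := -((α + β + γ) / (2 * β))
  (2 * (α + β + γ))⁻¹ • ![X, -X, Y, -Y]

theorem Q_mulVec (α β γ : K) (v : Fin 4 → K) :
    Q α β γ *ᵥ v = ![-α * v 0 + γ * v 2 + β * v 3, -α * v 1 + β * v 2 + γ * v 3,
      α * v 0 - (β + γ) * v 2, α * v 1 - (β + γ) * v 3] := by
  ext i
  fin_cases i <;>
    simp only [Q, mulVec, dotProduct, Fin.sum_univ_four, of_apply, cons_val', cons_val_fin_one,
      cons_val, Fin.isValue, Fin.reduceFinMk, Fin.zero_eta, Fin.mk_one] <;> ring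

theorem eq_zero_of_Q_mulVec_eq_zero [NeZero (2 : K)] {α β γ : K} (hα : α ≠ 0) (hβ : β ≠ 0)
    (hs : α + β + γ ≠ 0) {v : Fin 4 → K} (hv : Q α β γ *ᵥ v = 0) (hsum : ∑ i, v i = 0) :
    v = 0 := by
  rw [Q_mulVec] at hv
  have r0 := congrFun hv 0
  have r2 := congrFun hv 2
  have r3 := congrFun hv 3
  simp only [Fin.isValue, cons_val, Pi.zero_apply] at r0 r2 r3
  rw [Fin.sum_univ_four] at hsum
  have h23 : v 2 = v 3 := by
    have : β * (v 3 - v 2) = 0 := by linear_combination r0 + r2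
    exact (sub_eq_zero.mp ((mul_eq_zero.mp this).resolve_left hβ)).symm
  have h2 : v 2 = 0 := by
    have : 2 * (α + β + γ) * v 2 = 0 := by
      linear_combination α * hsum - r2 - r3 + (α + β + γ) * h23
    simpa [hs, two_ne_zero] using this
  have h0 : v 0 = 0 := by
    have : α * v 0 = 0 := by linear_combination r2 + (β + γ) * h2
    simpa [hα] using this
  have h1 : v 1 = 0 := by
    have : α * v 1 = 0 := by linear_combination r3 + (β + γ) * (h2 - h23)
    simpa [hα] using this
  ext i
  fin_cases i <;> simp [h0, h1, h2, ← h23]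

theorem Q_mulVec_injOn_sum_eq_zero [NeZero (2 : K)] {α β γ : K} (hα : α ≠ 0) (hβ : β ≠ 0)
    (hs : α + β + γ ≠ 0) {v w : Fin 4 → K} (hvw : Q α β γ *ᵥ v = Q α β γ *ᵥ w)
    (hv : ∑ i, v i = 0) (hw : ∑ i, w i = 0) : v = w := by
  rw [← sub_eq_zero]
  refine eq_zero_of_Q_mulVec_eq_zero hα hβ hs ?_ ?_
  · rw [mulVec_sub, hvw, sub_self]
  · simp [Finset.sum_sub_distrib, hv, hw]

theorem sum_chi (α β γ : K) : ∑ i, chi α β γ i = 0 := by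
  simp only [chi, Fin.sum_univ_four, Pi.smul_apply, smul_eq_mul, Fin.isValue, cons_val]
  ring

theorem Q_mulVec_chi [NeZero (2 : K)] {α β γ : K} (hα : α ≠ 0) (hβ : β ≠ 0) :
    Q α β γ *ᵥ chi α β γ =
      ![equilibrium α β γ 0, -equilibrium α β γ 1, equilibrium α β γ 2, -equilibrium α β γ 3] := by
  rw [Q_mulVec]
  ext i
  fin_cases i <;>
    simp only [chi, equilibrium, Pi.smul_apply, smul_eq_mul, cons_val, Fin.isValue,
      Fin.reduceFinMk, Fin.zero_eta, Fin.mk_one] <;>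
    field_simp <;> ring

def diffusionCoeff (χ : Fin 4 → K) : K := -(χ 0 - χ 1 + χ 2 - χ 3)

theorem diffusionCoeff_chi [NeZero (2 : K)] {α β γ : K} (hα : α ≠ 0) (hβ : β ≠ 0)
    (hs : α + β + γ ≠ 0) :
    diffusionCoeff (chi α β γ) =
      (α ^ 2 + 2 * α * γ + (γ + β) ^ 2) / (2 * α * β * (α + β + γ)) := by
  simp only [diffusionCoeff, chi, Pi.smul_apply, smul_eq_mul, Fin.isValue, cons_val]
  field_simp
  ring

end NCS2

/-- For all `α, β, γ > 0`, the vector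
`χ = (1/(2(α+β+γ))) (X, −X, Y, −Y)`, with `X = (β−γ)/(2β) − (γ+β)²/(2αβ)` and
`Y = −(α+β+γ)/(2β)`, is the unique vector in `ℝ⁴` whose components sum to zero and which
satisfies `Q(α,β,γ) χ = Λ 𝓔` (with `Λ = diag(1,−1,1,−1)`); the resulting diffusion
coefficient `D = −(χ₁ − χ₂ + χ₃ − χ₄)` equals `(α² + 2αγ + (γ+β)²)/(2αβ(α+β+γ))`. -/
theorem ncs2_chi_and_diffusion (α β γ : ℝ) (hα : 0 < α) (hβ : 0 < β) (hγ : 0 < γ) :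
    let Q : Matrix (Fin 4) (Fin 4) ℝ :=
      !![-α, 0, γ, β;
         0, -α, β, γ;
         α, 0, -(β + γ), 0;
         0, α, 0, -(β + γ)]
    let 𝓔 : Fin 4 → ℝ := (2 * (α + β + γ))⁻¹ • ![β + γ, β + γ, α, α]
    let Λ𝓔 : Fin 4 → ℝ := ![𝓔 0, -𝓔 1, 𝓔 2, -𝓔 3]
    let X : ℝ := (β - γ) / (2 * β) - (γ + β) ^ 2 / (2 * α * β)
    let Y : ℝ := -((α + β + γ) / (2 * β))
    let χ : Fin 4 → ℝ := (2 * (α + β + γ))⁻¹ • ![X, -X, Y, -Y]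
    (χ 0 + χ 1 + χ 2 + χ 3 = 0) ∧
    Q.mulVec χ = Λ𝓔 ∧
    (∀ y : Fin 4 → ℝ, y 0 + y 1 + y 2 + y 3 = 0 → Q.mulVec y = Λ𝓔 → y = χ) ∧
    -(χ 0 - χ 1 + χ 2 - χ 3)
      = (α ^ 2 + 2 * α * γ + (γ + β) ^ 2) / (2 * α * β * (α + β + γ)) := by
  intro Q 𝓔 Λ𝓔 X Y χ
  have hs : α + β + γ ≠ 0 := by positivity
  have hsum : ∑ i, χ i = 0 := NCS2.sum_chi α β γ
  have hsol : Q *ᵥ χ = Λ𝓔 := NCS2.Q_mulVec_chi hα.ne' hβ.ne'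
  refine ⟨by rwa [Fin.sum_univ_four] at hsum, hsol, fun y hy hQy => ?_,
    NCS2.diffusionCoeff_chi hα.ne' hβ.ne' hs⟩
  rw [← Fin.sum_univ_four] at hy
  exact NCS2.Q_mulVec_injOn_sum_eq_zero hα.ne' hβ.ne' hs (hQy.trans hsol.symm) hy hsum
end

section
/- (Adaptive chemotactic design.) Let 0 < β⋆ ≤ β* and let β : ℝ → [β⋆, β*] and c : ℝ → ℝ be differentiable. Define along positions x: b(x) = β(c(x)), a(x) = β⋆β*/b(x), and g(x) = β⋆ + β* − a(x) − b(x). Then: (i) g(x) ≥ 0 for all x; (ii) the diffusion coefficient D(x) = (a² + 2ag + (g+b)²)/(2ab(a+b+g)) is constant in x, equal to (β⋆² + β*²)/(2β⋆β*(β⋆+β*)); and (iii) the drift coefficient U(x) = (1/2) d/dx[(a+g)/(ab)] − (b+g−a)/(2a²(a+b+g)) · da/dx + dD/dx equals −(1/(β⋆+β*)) · β'(c(x)) c'(x) / β(c(x)), i.e. the drift is proportional to the gradient of the signal c. -/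
/-- **Adaptive chemotactic design.** Let `0 < β⋆ ≤ β*`, let
`β : ℝ → [β⋆, β*]` and `c : ℝ → ℝ` be differentiable, and set `b(x) = β(c(x))`,
`a(x) = β⋆β*/b(x)`, `g(x) = β⋆ + β* − a(x) − b(x)`. Then (i) `g ≥ 0`; (ii) the
diffusion coefficient `D` is constant, equal to `(β⋆² + β*²)/(2β⋆β*(β⋆+β*))`; and
(iii) the drift coefficient `U` equals `−(1/(β⋆+β*)) β'(c(x)) c'(x)/β(c(x))`, i.e. the
drift is proportional to the gradient of the signal `c`. -/
theorem ncs2_adaptive_design (βs βe : ℝ) (hβs : 0 < βs) (hβse : βs ≤ βe)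
    (β c : ℝ → ℝ)
    (hβ : Differentiable ℝ β) (hc : Differentiable ℝ c)
    (hβrange : ∀ y, β y ∈ Set.Icc βs βe) :
    let b : ℝ → ℝ := fun x => β (c x)
    let a : ℝ → ℝ := fun x => βs * βe / b x
    let g : ℝ → ℝ := fun x => βs + βe - a x - b x
    let D : ℝ → ℝ := fun x =>
      ((a x) ^ 2 + 2 * a x * g x + (g x + b x) ^ 2)
        / (2 * a x * b x * (a x + b x + g x))
    (∀ x, 0 ≤ g x) ∧
    (∀ x, D x = (βs ^ 2 + βe ^ 2) / (2 * βs * βe * (βs + βe))) ∧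
    (∀ x,
      (1 / 2) * deriv (fun y => (a y + g y) / (a y * b y)) x
        - (b x + g x - a x) / (2 * (a x) ^ 2 * (a x + b x + g x)) * deriv a x
        + deriv D x
      = -(1 / (βs + βe)) * (deriv β (c x) * deriv c x / β (c x))) := by
  intro b a g D
  have hβe : 0 < βe := lt_of_lt_of_le hβs hβse
  have hs : (0:ℝ) < βs + βe := by linarith
  have hbpos : ∀ x, 0 < b x := fun x => lt_of_lt_of_le hβs (hβrange (c x)).1
  have hbne : ∀ x, b x ≠ 0 := fun x => (hbpos x).ne'
  have hab : ∀ x, a x * b x = βs * βe := fun x => div_mul_cancel₀ _ (hbne x)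
  have hgb : ∀ x, g x = (b x - βs) * (βe - b x) / b x := by
    intro x
    show βs + βe - βs * βe / b x - b x = _
    field_simp [hbne x]
    ring
  have hg : ∀ x, 0 ≤ g x := by
    intro x
    rw [hgb x]
    exact div_nonneg (mul_nonneg (by linarith [(hβrange (c x)).1])
      (by linarith [(hβrange (c x)).2])) (hbpos x).le
  have hsum : ∀ x, a x + b x + g x = βs + βe := by
    intro x; show a x + b x + (βs + βe - a x - b x) = βs + βe; ring
  have hnum : ∀ x, (a x) ^ 2 + 2 * a x * g x + (g x + b x) ^ 2 = βs ^ 2 + βe ^ 2 := by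
    intro x
    have h := hab x
    show (a x) ^ 2 + 2 * a x * (βs + βe - a x - b x)
        + ((βs + βe - a x - b x) + b x) ^ 2 = βs ^ 2 + βe ^ 2
    linear_combination (-2 : ℝ) * h
  have hD : ∀ x, D x = (βs ^ 2 + βe ^ 2) / (2 * βs * βe * (βs + βe)) := by
    intro x
    show ((a x) ^ 2 + 2 * a x * g x + (g x + b x) ^ 2)
        / (2 * a x * b x * (a x + b x + g x)) = _
    rw [hnum x, hsum x, mul_assoc 2, hab x, ← mul_assoc]
  refine ⟨hg, hD, fun x => ?_⟩
  -- derivative of b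
  have hb' : HasDerivAt b (deriv β (c x) * deriv c x) x :=
    (hβ (c x)).hasDerivAt.comp x (hc x).hasDerivAt
  set B := b x with hB
  set B' := deriv β (c x) * deriv c x with hB'
  -- first function equals (βs+βe - b y)/(βs*βe)
  have hfun : (fun y => (a y + g y) / (a y * b y))
      = fun y => (βs + βe - b y) / (βs * βe) := by
    funext y
    rw [hab y]
    congr 1
    show βs * βe / b y + (βs + βe - βs * βe / b y - b y) = _
    ring
  have hd1 : deriv (fun y => (a y + g y) / (a y * b y)) x = (0 - B') / (βs * βe) := by
    rw [hfun]
    exact (((hasDerivAt_const x (βs + βe)).sub hb').div_const (βs * βe)).deriv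
  have hd2 : deriv a x = (0 * B - βs * βe * B') / B ^ 2 := by
    have : HasDerivAt a ((0 * B - βs * βe * B') / B ^ 2) x :=
      (hasDerivAt_const x (βs * βe)).div hb' (hbne x)
    exact this.deriv
  have hd3 : deriv D x = 0 := by
    have : D = fun _ => (βs ^ 2 + βe ^ 2) / (2 * βs * βe * (βs + βe)) := funext hD
    rw [this, deriv_const]
  rw [hd1, hd2, hd3]
  show (1 / 2) * ((0 - B') / (βs * βe))
      - (B + (βs + βe - βs * βe / B - B) - βs * βe / B)
        / (2 * (βs * βe / B) ^ 2 * (βs * βe / B + B + (βs + βe - βs * βe / B - B)))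
        * ((0 * B - βs * βe * B') / B ^ 2)
      + 0 = -(1 / (βs + βe)) * (B' / B)
  have hBne : B ≠ 0 := hbne x
  field_simp
  ring
end
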